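/- For the cycle C_{2k} (k ≥ 1) and any vertex v, the vertex residual Res(C_{2k}, {v}) is isomorphic to K₁, and for any edge {u,v}, the edge residual Res(C_{2k}, {u,v}) is isomorphic to K₂. -/

import Mathlib

open SimpleGraph
open scoped Fin.NatCast

/-!
In `C_n` the distance from `v` to `w` is `min(t, n - t)`, where `t` is the residue of `w - v`:
each edge changes `w - v` by `±1`, and the two arcs of the cycle realise the bound. For `n = 2k`
this is at most `k`, with equality only at the antipode `v + k`. For an edge `{u, v}` the
distance to `{u, v}` is at most `k - 1`, with equality exactly at the antipodes `u + k` and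
`v + k`, which are again adjacent. So both residuals are cliques, on one and two vertices.
-/

/-- Distance from a set of vertices `S` to a vertex `v`: `min_{s ∈ S} d(s, v)`. -/
noncomputable def setDist {V : Type*} (G : SimpleGraph V) (S : Set V) (v : V) : ℕ :=
  sInf ((fun s => G.dist s v) '' S)

/-- The set of vertices at maximal distance from `S`. -/
def resSet {V : Type*} (G : SimpleGraph V) (S : Set V) : Set V :=
  {v | ∀ w, setDist G S w ≤ setDist G S v}

/-- The distance-residual graph: subgraph induced on vertices at maximal distance from `S`. -/
def Res {V : Type*} (G : SimpleGraph V) (S : Set V) : SimpleGraph (resSet G S) :=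
  SimpleGraph.induce (resSet G S) G

namespace SimpleGraph

variable {V : Type*} {G : SimpleGraph V}

theorem setDist_singleton (v w : V) : setDist G {v} w = G.dist v w := by
  simp [setDist]

theorem setDist_pair (u v w : V) : setDist G {u, v} w = min (G.dist u w) (G.dist v w) := by
  rw [setDist, Set.image_pair, csInf_pair]

theorem resSet_eq_of_forall_le {S T : Set V} {m : ℕ} (hle : ∀ w, setDist G S w ≤ m)
    (heq : ∀ w, setDist G S w = m ↔ w ∈ T) (hT : T.Nonempty) : resSet G S = T := by
  obtain ⟨t, ht⟩ := hT
  ext w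
  refine ⟨fun hw => (heq w).1 (le_antisymm (hle w) ?_), fun hw w' => ?_⟩
  · exact (heq t).2 ht ▸ hw t
  · exact (heq w).2 hw ▸ hle w'

theorem nonempty_induce_iso_top_of_isClique {s : Set V} {m : ℕ} (hs : G.IsClique s)
    (hcard : s.ncard = m) (hm : m ≠ 0) : Nonempty (G.induce s ≃g (⊤ : SimpleGraph (Fin m))) := by
  have : Finite s := (Set.finite_of_ncard_ne_zero (hcard ▸ hm)).to_subtype
  rw [induce_eq_top.2 hs]
  exact ⟨Iso.completeGraph (Finite.equivFinOfCardEq hcard)⟩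

theorem dist_add_nsmul_le [AddMonoid V] {d : V} (h : ∀ x, G.Adj x (x + d)) (x : V) (j : ℕ) :
    G.dist x (x + j • d) ≤ j := by
  suffices ∃ p : G.Walk x (x + j • d), p.length = j by
    obtain ⟨p, hp⟩ := this
    exact (dist_le p).trans_eq hp
  induction j with
  | zero => exact ⟨Walk.nil.copy rfl (by simp), by simp⟩
  | succ j ih =>
    obtain ⟨p, hp⟩ := ih
    exact ⟨(p.concat (h _)).copy rfl (by rw [succ_nsmul, add_assoc]), by simp [hp]⟩

end SimpleGraph

namespace Fin

variable {n : ℕ}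

def cycleNorm (x : Fin n) : ℕ := min x.val (n - x.val)

theorem cycleNorm_eq_min_val_neg [NeZero n] (x : Fin n) : x.cycleNorm = min x.val (-x).val := by
  rw [cycleNorm, val_neg]
  split_ifs with hx
  · simp [hx]
  · rfl

theorem cycleNorm_add_le (x y : Fin n) : (x + y).cycleNorm ≤ x.cycleNorm + y.cycleNorm := by
  have := x.isLt
  have := y.isLt
  simp only [cycleNorm, val_add_eq_ite]
  split_ifs <;> omega

theorem two_mul_cycleNorm_le (x : Fin n) : 2 * x.cycleNorm ≤ n := by
  simp only [cycleNorm]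
  omega

end Fin

section CycleGraph

variable {n : ℕ}

theorem cycleGraph_dist_le_val_sub (v w : Fin n) : (cycleGraph n).dist v w ≤ (w - v).val := by
  rcases lt_or_ge n 2 with hn | hn
  · have : Subsingleton (Fin n) := Fin.subsingleton_iff_le_one.2 (by omega)
    simp [Subsingleton.elim v w]
  · have : NeZero n := ⟨by omega⟩
    have hadj (x : Fin n) : (cycleGraph n).Adj x (x + 1) := by
      simp [cycleGraph_adj', Nat.mod_eq_of_lt hn]
    simpa using dist_add_nsmul_le hadj v (w - v).val

variable [NeZero n]

theorem cycleGraph_adj_add_add_iff (u v c : Fin n) :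
    (cycleGraph n).Adj (u + c) (v + c) ↔ (cycleGraph n).Adj u v := by
  simp only [cycleGraph_adj', add_sub_add_right_eq_sub]

theorem cycleGraph_adj_sub_sub_iff (w u v : Fin n) :
    (cycleGraph n).Adj (w - u) (w - v) ↔ (cycleGraph n).Adj u v := by
  simp only [cycleGraph_adj', sub_sub_sub_cancel_left, or_comm]

theorem cycleNorm_sub_le_length {v w : Fin n} (p : (cycleGraph n).Walk v w) :
    (w - v).cycleNorm ≤ p.length := by
  induction p with
  | nil => simp [Fin.cycleNorm]
  | @cons a b c hab q ih =>
    have hstep : (b - a).cycleNorm ≤ 1 := by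
      rw [Fin.cycleNorm_eq_min_val_neg, neg_sub]
      rw [cycleGraph_adj'] at hab
      omega
    calc (c - a).cycleNorm = (c - b + (b - a)).cycleNorm := by rw [sub_add_sub_cancel]
      _ ≤ (c - b).cycleNorm + (b - a).cycleNorm := Fin.cycleNorm_add_le _ _
      _ ≤ (Walk.cons hab q).length := by rw [Walk.length_cons]; omega

theorem cycleGraph_dist (v w : Fin n) : (cycleGraph n).dist v w = (w - v).cycleNorm := by
  obtain ⟨m, rfl⟩ := Nat.exists_eq_succ_of_ne_zero (NeZero.ne n)
  obtain ⟨p, hp⟩ := cycleGraph_connected.exists_walk_length_eq_dist v w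
  refine le_antisymm ?_ (hp ▸ cycleNorm_sub_le_length p)
  rw [Fin.cycleNorm_eq_min_val_neg, neg_sub, dist_comm]
  exact le_min (dist_comm ▸ cycleGraph_dist_le_val_sub v w) (cycleGraph_dist_le_val_sub w v)

end CycleGraph

section EvenCycle

variable {k : ℕ}

theorem Fin.min_cycleNorm_le_of_adj {x y : Fin (2 * k)} (h : (cycleGraph (2 * k)).Adj x y) :
    min x.cycleNorm y.cycleNorm ≤ k - 1 := by
  rw [cycleGraph_adj'] at h
  have hxy := Fin.intCast_val_sub_eq_sub_add_ite x y
  have hyx := Fin.intCast_val_sub_eq_sub_add_ite y x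
  simp only [Fin.cycleNorm]
  split_ifs at hxy hyx <;> omega

variable [NeZero k]

theorem Fin.cycleNorm_eq_iff_eq_half (x : Fin (2 * k)) : x.cycleNorm = k ↔ x = k := by
  have hk := NeZero.pos k
  rw [Fin.ext_iff, Fin.val_natCast, Nat.mod_eq_of_lt (by omega), Fin.cycleNorm]
  omega

theorem Fin.min_cycleNorm_eq_iff_of_adj {x y : Fin (2 * k)} (h : (cycleGraph (2 * k)).Adj x y) :
    min x.cycleNorm y.cycleNorm = k - 1 ↔ x = k ∨ y = k := by
  have hk := NeZero.pos k
  rw [cycleGraph_adj'] at h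
  have hxy := Fin.intCast_val_sub_eq_sub_add_ite x y
  have hyx := Fin.intCast_val_sub_eq_sub_add_ite y x
  simp only [Fin.cycleNorm, Fin.ext_iff, Fin.val_natCast, Nat.mod_eq_of_lt (by omega : k < 2 * k)]
  split_ifs at hxy hyx <;> omega

theorem resSet_cycleGraph_singleton (v : Fin (2 * k)) :
    resSet (cycleGraph (2 * k)) {v} = {v + k} := by
  refine resSet_eq_of_forall_le (m := k) (fun w => ?_) (fun w => ?_) (Set.singleton_nonempty _)
  · rw [setDist_singleton, cycleGraph_dist]
    have := (w - v).two_mul_cycleNorm_le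
    omega
  · rw [setDist_singleton, cycleGraph_dist, Fin.cycleNorm_eq_iff_eq_half, sub_eq_iff_eq_add']
    rfl

theorem resSet_cycleGraph_pair {u v : Fin (2 * k)} (huv : (cycleGraph (2 * k)).Adj u v) :
    resSet (cycleGraph (2 * k)) {u, v} = {u + k, v + k} := by
  have hadj (w : Fin (2 * k)) : (cycleGraph (2 * k)).Adj (w - u) (w - v) :=
    (cycleGraph_adj_sub_sub_iff w u v).2 huv
  refine resSet_eq_of_forall_le (m := k - 1) (fun w => ?_) (fun w => ?_) (Set.insert_nonempty _ _)
  · rw [setDist_pair, cycleGraph_dist, cycleGraph_dist]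
    exact Fin.min_cycleNorm_le_of_adj (hadj w)
  · rw [setDist_pair, cycleGraph_dist, cycleGraph_dist, Fin.min_cycleNorm_eq_iff_of_adj (hadj w),
      sub_eq_iff_eq_add', sub_eq_iff_eq_add']
    rfl

end EvenCycle

theorem statement_5 (k : ℕ) (hk : 1 ≤ k) :
    (∀ v : Fin (2 * k),
      Nonempty (Res (cycleGraph (2 * k)) {v} ≃g (⊤ : SimpleGraph (Fin 1)))) ∧
    (∀ u v : Fin (2 * k), (cycleGraph (2 * k)).Adj u v →
      Nonempty (Res (cycleGraph (2 * k)) {u, v} ≃g (⊤ : SimpleGraph (Fin 2)))) := by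
  have : NeZero k := ⟨by omega⟩
  refine ⟨fun v => ?_, fun u v huv => ?_⟩
  · rw [Res, resSet_cycleGraph_singleton]
    exact nonempty_induce_iso_top_of_isClique (isClique_singleton _) (Set.ncard_singleton _)
      one_ne_zero
  · rw [Res, resSet_cycleGraph_pair huv]
    have hne : u + (k : Fin (2 * k)) ≠ v + k := by simpa using huv.ne
    exact nonempty_induce_iso_top_of_isClique
      (isClique_pair.2 fun _ => (cycleGraph_adj_add_add_iff u v k).2 huv) (Set.ncard_pair hne)
      two_ne_zero
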